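/- arXiv:1705.04112 — 4 statements merged into one kernel-verified Lean document; each statement's English description precedes it below -/
import Mathlib

section
/- Let b+1 > c > 0, and for f(z) = Σ_{k≥0} a_k z^k analytic on the unit disc define σ_n(f,z) = (1/B_n) Σ_{k=0}^n B_{n-k} a_k z^k where B_0 = 1 and B_k = ((b)_k/(c)_k)(1+b-c)/b. Then the recurrence σ_n(f,z) = ((c+n-1)/(b+n-1)) σ_{n-1}(f,z) + ((b-c)/B_n) Σ_{k=0}^{n-2} (B_{n-k-1}/(c+n-k-1)) a_k z^k + (1/B_n)((1+b-2c)/c) a_{n-1} z^{n-1} + (B_0/B_n) a_n z^n holds for all n ≥ 2. -/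
/-- Pochhammer symbol (rising factorial) `(x)_k = x(x+1)⋯(x+k-1)`. -/
def poch (x : ℝ) (k : ℕ) : ℝ := ∏ i ∈ Finset.range k, (x + i)

/-- Cesàro normalizing constants `B_0 = 1`, `B_k = ((b)_k/(c)_k)(1+b-c)/b`. -/
noncomputable def cesB (b c : ℝ) : ℕ → ℝ
  | 0 => 1
  | (k + 1) => (poch b (k + 1) / poch c (k + 1)) * (1 + b - c) / b

/-- The `n`-th Cesàro mean of type `(b-1;c)` of `f(z) = Σ a_k z^k`:
`σ_n(f,z) = (1/B_n) Σ_{k=0}^n B_{n-k} a_k z^k`. -/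
noncomputable def cesaroMean (b c : ℝ) (n : ℕ) (a : ℕ → ℂ) (z : ℂ) : ℂ :=
  (1 / (cesB b c n : ℂ)) *
    ∑ k ∈ Finset.range (n + 1), (cesB b c (n - k) : ℂ) * a k * z ^ k


lemma poch_succ (x : ℝ) (k : ℕ) : poch x (k + 1) = poch x k * (x + k) :=
  Finset.prod_range_succ _ _

lemma poch_pos {x : ℝ} (hx : 0 < x) (k : ℕ) : 0 < poch x k :=
  Finset.prod_pos fun i _ => by positivity

lemma poch_ne_zero {x : ℝ} (hx : -1 < x) (hx0 : x ≠ 0) (k : ℕ) : poch x k ≠ 0 := by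
  refine Finset.prod_ne_zero_iff.mpr fun i _ => ?_
  rcases Nat.eq_zero_or_pos i with h | h
  · simpa [h] using hx0
  · have : (1:ℝ) ≤ i := by exact_mod_cast h
    nlinarith

lemma cesB_succ (b c : ℝ) (j : ℕ) :
    cesB b c (j + 2) = cesB b c (j + 1) * ((b + (j + 1 : ℕ)) / (c + (j + 1 : ℕ))) := by
  simp only [cesB]
  rw [poch_succ b (j + 1), poch_succ c (j + 1), mul_div_mul_comm]
  push_cast
  ring

lemma cesB_ne_zero {b c : ℝ} (hb : b + 1 > c) (hc : 0 < c) (hb0 : b ≠ 0) (m : ℕ) :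
    cesB b c m ≠ 0 := by
  cases m with
  | zero => simp [cesB]
  | succ k =>
    have hbm1 : (-1:ℝ) < b := by linarith
    have h1 : poch b (k + 1) ≠ 0 := poch_ne_zero hbm1 hb0 _
    have h2 : poch c (k + 1) ≠ 0 := (poch_pos hc _).ne'
    have h3 : 1 + b - c ≠ 0 := by linarith
    simp only [cesB]
    exact div_ne_zero (mul_ne_zero (div_ne_zero h1 h2) h3) hb0

lemma cesB_b_zero (c : ℝ) (k : ℕ) : cesB 0 c (k + 1) = 0 := by
  have h : poch 0 (k + 1) = 0 :=
    Finset.prod_eq_zero (Finset.mem_range.mpr (Nat.succ_pos k)) (by simp)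
  simp [cesB, h]

lemma cesB_one {b c : ℝ} (hb0 : b ≠ 0) (hc : c ≠ 0) :
    cesB b c 1 = 1 + (1 + b - 2 * c) / c := by
  have h : ∀ x : ℝ, poch x 1 = x := fun x => by simp [poch]
  simp only [cesB, h]
  field_simp
  ring

lemma cesB_step {b c : ℝ} (hc : 0 < c) (j : ℕ) :
    cesB b c (j + 2) = cesB b c (j + 1) + (b - c) * cesB b c (j + 1) / (c + (j + 1 : ℕ)) := by
  have hne : c + ((j : ℝ) + 1) ≠ 0 := by positivity
  rw [cesB_succ]
  push_cast
  field_simp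
  ring

/-- The recurrence for the Cesàro mean of type `(b-1;c)`, valid for `n ≥ 2`. -/
theorem stmt7 (b c : ℝ) (hb : b + 1 > c) (hc : 0 < c)
    (a : ℕ → ℂ) (n : ℕ) (hn : 2 ≤ n) (z : ℂ) :
    cesaroMean b c n a z
      = (((c + n - 1) / (b + n - 1) : ℝ) : ℂ) * cesaroMean b c (n - 1) a z
        + (((b - c) : ℝ) / (cesB b c n : ℂ)) *
            ∑ k ∈ Finset.range (n - 1),
              ((cesB b c (n - k - 1) : ℝ) / ((c + n - k - 1 : ℝ) : ℂ)) * a k * z ^ k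
        + (1 / (cesB b c n : ℂ)) * (((1 + b - 2 * c) / c : ℝ) : ℂ) * a (n - 1) * z ^ (n - 1)
        + ((cesB b c 0 : ℝ) / (cesB b c n : ℂ)) * a n * z ^ n := by
  obtain ⟨m, rfl⟩ : ∃ m, n = m + 2 := ⟨n - 2, by omega⟩
  simp only [show m + 2 - 1 = m + 1 from rfl]
  by_cases hb0 : b = 0
  · subst hb0
    have h1 : cesB 0 c (m + 1) = 0 := cesB_b_zero c m
    have h2 : cesB 0 c (m + 2) = 0 := cesB_b_zero c (m + 1)
    simp [cesaroMean, h1, h2]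
  · have hc0 : c ≠ 0 := hc.ne'
    have hB1r : cesB b c (m + 1) ≠ 0 := cesB_ne_zero hb hc hb0 _
    have hB2r : cesB b c (m + 2) ≠ 0 := cesB_ne_zero hb hc hb0 _
    have hB1 : ((cesB b c (m + 1) : ℝ) : ℂ) ≠ 0 := Complex.ofReal_ne_zero.mpr hB1r
    have hB2 : ((cesB b c (m + 2) : ℝ) : ℂ) ≠ 0 := Complex.ofReal_ne_zero.mpr hB2r
    have hm0 : (0:ℝ) ≤ m := Nat.cast_nonneg m
    have hbm : b + ((m:ℝ) + 1) ≠ 0 := by nlinarith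
    have hcm : c + ((m:ℝ) + 1) ≠ 0 := by nlinarith
    have hco : ((c + ((m + 2 : ℕ) : ℝ) - 1) / (b + ((m + 2 : ℕ) : ℝ) - 1))
        = cesB b c (m + 1) / cesB b c (m + 2) := by
      have h1 : c + ((m + 2 : ℕ) : ℝ) - 1 = c + ((m:ℝ) + 1) := by push_cast; ring
      have h2 : b + ((m + 2 : ℕ) : ℝ) - 1 = b + ((m:ℝ) + 1) := by push_cast; ring
      have h3 : ((m + 1 : ℕ) : ℝ) = (m:ℝ) + 1 := by push_cast; ring
      rw [h1, h2, cesB_succ b c m, h3]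
      field_simp
    have hcoC : (((c + ((m + 2 : ℕ) : ℝ) - 1) / (b + ((m + 2 : ℕ) : ℝ) - 1) : ℝ) : ℂ)
        = ((cesB b c (m + 1) : ℝ) : ℂ) / ((cesB b c (m + 2) : ℝ) : ℂ) := by
      rw [hco, Complex.ofReal_div]
    have hsum : (∑ k ∈ Finset.range (m + 2 + 1), ((cesB b c (m + 2 - k) : ℝ) : ℂ) * a k * z ^ k)
        = (∑ k ∈ Finset.range (m + 1 + 1), ((cesB b c (m + 1 - k) : ℝ) : ℂ) * a k * z ^ k)
          + (((b - c) : ℝ) : ℂ) * ∑ k ∈ Finset.range (m + 1),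
              ((cesB b c (m + 2 - k - 1) : ℝ) / ((c + ((m + 2 : ℕ) : ℝ) - (k : ℝ) - 1 : ℝ) : ℂ)) * a k * z ^ k
          + (((1 + b - 2 * c) / c : ℝ) : ℂ) * a (m + 1) * z ^ (m + 1)
          + ((cesB b c 0 : ℝ) : ℂ) * a (m + 2) * z ^ (m + 2) := by
      rw [Finset.sum_range_succ (fun k => ((cesB b c (m + 2 - k) : ℝ) : ℂ) * a k * z ^ k) (m + 2),
          Finset.sum_range_succ (fun k => ((cesB b c (m + 2 - k) : ℝ) : ℂ) * a k * z ^ k) (m + 1),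
          Finset.sum_range_succ (fun k => ((cesB b c (m + 1 - k) : ℝ) : ℂ) * a k * z ^ k) (m + 1)]
      simp only [show m + 2 - (m + 1) = 1 from by omega, show m + 1 - (m + 1) = 0 from by omega,
        show m + 2 - (m + 2) = 0 from by omega]
      have hsplit : (∑ k ∈ Finset.range (m + 1), ((cesB b c (m + 2 - k) : ℝ) : ℂ) * a k * z ^ k)
          = (∑ k ∈ Finset.range (m + 1), ((cesB b c (m + 1 - k) : ℝ) : ℂ) * a k * z ^ k)
            + (((b - c) : ℝ) : ℂ) * ∑ k ∈ Finset.range (m + 1),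
                ((cesB b c (m + 2 - k - 1) : ℝ) / ((c + ((m + 2 : ℕ) : ℝ) - (k : ℝ) - 1 : ℝ) : ℂ)) * a k * z ^ k := by
        rw [Finset.mul_sum, ← Finset.sum_add_distrib]
        refine Finset.sum_congr rfl fun k hk => ?_
        have hk' : k ≤ m := by simpa [Nat.lt_succ_iff] using hk
        have e1 : m + 2 - k = (m - k) + 2 := by omega
        have e2 : m + 1 - k = (m - k) + 1 := by omega
        have e3 : m + 2 - k - 1 = (m - k) + 1 := by omega
        have e5 : ((m - k : ℕ) : ℝ) = (m : ℝ) - (k : ℝ) := Nat.cast_sub hk'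
        have e4 : (c + ((m + 2 : ℕ) : ℝ) - (k : ℝ) - 1) = c + (((m - k) + 1 : ℕ) : ℝ) := by
          push_cast [e5]; ring
        rw [e3, e1, e2, e4, cesB_step hc (m - k)]
        push_cast
        ring
      rw [hsplit, cesB_one hb0 hc0, show cesB b c 0 = (1:ℝ) from rfl]
      push_cast
      ring
    simp only [cesaroMean]
    have hred : ∀ S : ℂ, ((cesB b c (m + 1) : ℝ) : ℂ) / ((cesB b c (m + 2) : ℝ) : ℂ)
        * ((1 / ((cesB b c (m + 1) : ℝ) : ℂ)) * S) = (1 / ((cesB b c (m + 2) : ℝ) : ℂ)) * S := by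
      intro S
      field_simp
    rw [hcoC, hsum, hred]
    ring
end

section
/- If F and G are analytic on the unit disc with F ≺ (1-z)^α and G ≺ (1-z)^β for α, β > 0 with α + β ≤ 2, then FG ≺ (1-z)^(α+β). -/
open Complex Metric

/-- Subordination on the unit disc. -/
def Subord (F G : ℂ → ℂ) : Prop :=
  ∃ ω : ℂ → ℂ, DifferentiableOn ℂ ω (ball (0 : ℂ) 1) ∧ ω 0 = 0 ∧
    (∀ z ∈ ball (0 : ℂ) 1, ω z ∈ ball (0 : ℂ) 1) ∧
    ∀ z ∈ ball (0 : ℂ) 1, F z = G (ω z)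

open Real in
/-- Basic facts about a point `u` with `|1 - u| < 1`. -/
lemma ball_facts {u : ℂ} (hu : ‖1 - u‖ < 1) :
    u ≠ 0 ∧ 0 < u.re ∧ ‖u‖ < 2 * Real.cos (Complex.arg u) ∧
      |Complex.arg u| < π / 2 := by
  have h1 : Complex.normSq (1 - u) < 1 := by
    have := Complex.sq_norm (1 - u)
    nlinarith [norm_nonneg (1 - u)]
  have hns : Complex.normSq u < 2 * u.re := by
    have : Complex.normSq (1 - u) = 1 - 2 * u.re + Complex.normSq u := by
      simp [Complex.normSq_sub, Complex.normSq_apply]; ring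
    nlinarith
  have hu0 : u ≠ 0 := by
    rintro rfl
    simp at hu
  have hre : 0 < u.re := by
    have := Complex.normSq_pos.2 hu0
    linarith
  have habs : 0 < ‖u‖ := norm_pos_iff.mpr hu0
  have hcos : Real.cos (Complex.arg u) = u.re / ‖u‖ := Complex.cos_arg hu0
  have hkey : ‖u‖ < 2 * Real.cos (Complex.arg u) := by
    rw [hcos, mul_div_assoc', lt_div_iff₀ habs]
    have : ‖u‖ * ‖u‖ = Complex.normSq u := by
      rw [← Complex.sq_norm, sq]
    nlinarith
  have harg : |Complex.arg u| < π / 2 :=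
    Complex.abs_arg_lt_pi_div_two_iff.2 (Or.inl hre)
  exact ⟨hu0, hre, hkey, harg⟩

open Real in
/-- The key geometric fact: the disc `|1 - w| < 1` is closed under weighted
geometric means. -/
lemma key_geom {u v : ℂ} (hu : ‖1 - u‖ < 1) (hv : ‖1 - v‖ < 1)
    {l m : ℝ} (hl : 0 < l) (hm : 0 < m) (hlm : l + m = 1) :
    ‖1 - Complex.exp ((l : ℂ) * Complex.log u + (m : ℂ) * Complex.log v)‖ < 1 := by
  obtain ⟨hu0, hure, huabs, huarg⟩ := ball_facts hu
  obtain ⟨hv0, hvre, hvabs, hvarg⟩ := ball_facts hv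
  set L : ℂ := (l : ℂ) * Complex.log u + (m : ℂ) * Complex.log v with hL
  have hLre : L.re = l * Real.log (‖u‖) + m * Real.log (‖v‖) := by
    simp [hL, Complex.log_re]
  have hLim : L.im = l * Complex.arg u + m * Complex.arg v := by
    simp [hL, Complex.log_im]
  -- |exp L| = ru^l * rv^m
  have hu0' : 0 < ‖u‖ := norm_pos_iff.mpr hu0
  have hv0' : 0 < ‖v‖ := norm_pos_iff.mpr hv0
  have habsE : Real.exp L.re = ‖u‖ ^ l * ‖v‖ ^ m := by
    rw [hLre, Real.exp_add, Real.rpow_def_of_pos hu0', Real.rpow_def_of_pos hv0',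
      mul_comm (Real.log _) l, mul_comm (Real.log _) m]
  -- concavity of cos
  have hmemu : Complex.arg u ∈ Set.Icc (-(π / 2)) (π / 2) := by
    rw [abs_lt] at huarg; exact ⟨huarg.1.le, huarg.2.le⟩
  have hmemv : Complex.arg v ∈ Set.Icc (-(π / 2)) (π / 2) := by
    rw [abs_lt] at hvarg; exact ⟨hvarg.1.le, hvarg.2.le⟩
  have hconc : l * Real.cos (Complex.arg u) + m * Real.cos (Complex.arg v)
      ≤ Real.cos (l * Complex.arg u + m * Complex.arg v) := by
    have := strictConcaveOn_cos_Icc.concaveOn.2 hmemu hmemv hl.le hm.le hlm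
    simpa using this
  -- AM-GM
  have hgm : ‖u‖ ^ l * ‖v‖ ^ m ≤ l * ‖u‖ + m * ‖v‖ :=
    Real.geom_mean_le_arith_mean2_weighted hl.le hm.le hu0'.le hv0'.le hlm
  have hstep : l * ‖u‖ + m * ‖v‖
      < 2 * (l * Real.cos (Complex.arg u) + m * Real.cos (Complex.arg v)) := by
    nlinarith [mul_lt_mul_of_pos_left huabs hl, mul_lt_mul_of_pos_left hvabs hm]
  have hmain : Real.exp L.re < 2 * Real.cos L.im := by
    rw [habsE, hLim]
    calc ‖u‖ ^ l * ‖v‖ ^ m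
        ≤ l * ‖u‖ + m * ‖v‖ := hgm
      _ < 2 * (l * Real.cos (Complex.arg u) + m * Real.cos (Complex.arg v)) := hstep
      _ ≤ 2 * Real.cos (l * Complex.arg u + m * Complex.arg v) := by linarith [hconc]
  -- wrap up
  have hwre : (Complex.exp L).re = Real.exp L.re * Real.cos L.im := Complex.exp_re L
  have hwabs : ‖Complex.exp L‖ = Real.exp L.re := Complex.norm_exp L
  have hE : 0 < Real.exp L.re := Real.exp_pos _
  have hns : Complex.normSq (Complex.exp L) < 2 * (Complex.exp L).re := by
    have : Complex.normSq (Complex.exp L) = Real.exp L.re * Real.exp L.re := by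
      rw [← Complex.sq_norm, hwabs, sq]
    rw [this, hwre]
    nlinarith
  have : Complex.normSq (1 - Complex.exp L) < 1 := by
    have : Complex.normSq (1 - Complex.exp L)
        = 1 - 2 * (Complex.exp L).re + Complex.normSq (Complex.exp L) := by
      simp [Complex.normSq_sub, Complex.normSq_apply]; ring
    nlinarith
  have := Complex.sq_norm (1 - Complex.exp L)
  nlinarith [norm_nonneg (1 - Complex.exp L)]

/-- If `F ≺ (1-z)^α` and `G ≺ (1-z)^β` with `α, β > 0`, `α + β ≤ 2`,
then `FG ≺ (1-z)^(α+β)`. -/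
theorem stmt10 (F G : ℂ → ℂ) (α β : ℝ) (hα : 0 < α) (hβ : 0 < β)
    (hαβ : α + β ≤ 2)
    (hF : DifferentiableOn ℂ F (ball (0 : ℂ) 1))
    (hG : DifferentiableOn ℂ G (ball (0 : ℂ) 1))
    (hFs : Subord F (fun z => (1 - z) ^ (α : ℂ)))
    (hGs : Subord G (fun z => (1 - z) ^ (β : ℂ))) :
    Subord (fun z => F z * G z) (fun z => (1 - z) ^ ((α + β : ℝ) : ℂ)) := by
  obtain ⟨ω₁, hω₁d, hω₁0, hω₁b, hω₁e⟩ := hFs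
  obtain ⟨ω₂, hω₂d, hω₂0, hω₂b, hω₂e⟩ := hGs
  have hs : 0 < α + β := by linarith
  set l : ℝ := α / (α + β) with hldef
  set m : ℝ := β / (α + β) with hmdef
  have hl : 0 < l := div_pos hα hs
  have hm : 0 < m := div_pos hβ hs
  have hlm : l + m = 1 := by rw [hldef, hmdef]; field_simp
  set ω : ℂ → ℂ := fun z =>
    1 - Complex.exp ((l : ℂ) * Complex.log (1 - ω₁ z) + (m : ℂ) * Complex.log (1 - ω₂ z))
    with hωdef
  have hu : ∀ z ∈ ball (0 : ℂ) 1, ‖1 - (1 - ω₁ z)‖ < 1 := by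
    intro z hz
    simpa [Complex.dist_eq] using mem_ball.1 (hω₁b z hz)
  have hv : ∀ z ∈ ball (0 : ℂ) 1, ‖1 - (1 - ω₂ z)‖ < 1 := by
    intro z hz
    simpa [Complex.dist_eq] using mem_ball.1 (hω₂b z hz)
  refine ⟨ω, ?_, ?_, ?_, ?_⟩
  · -- differentiability
    intro z hz
    have hu0 := (ball_facts (hu z hz)).1
    have hure := (ball_facts (hu z hz)).2.1
    have hv0 := (ball_facts (hv z hz)).1
    have hvre := (ball_facts (hv z hz)).2.1
    have h1 : DifferentiableWithinAt ℂ (fun z => Complex.log (1 - ω₁ z)) (ball (0:ℂ) 1) z :=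
      ((differentiableWithinAt_const 1).sub (hω₁d z hz)).clog
        (Complex.mem_slitPlane_iff.2 (Or.inl hure))
    have h2 : DifferentiableWithinAt ℂ (fun z => Complex.log (1 - ω₂ z)) (ball (0:ℂ) 1) z :=
      ((differentiableWithinAt_const 1).sub (hω₂d z hz)).clog
        (Complex.mem_slitPlane_iff.2 (Or.inl hvre))
    exact (differentiableWithinAt_const 1).sub
      (Complex.differentiable_exp.differentiableAt.comp_differentiableWithinAt z
        (((differentiableWithinAt_const _).mul h1).add ((differentiableWithinAt_const _).mul h2)))
  · -- ω 0 = 0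
    show (1 : ℂ) - _ = 0
    rw [hω₁0, hω₂0]
    simp
  · -- maps ball to ball
    intro z hz
    rw [mem_ball, Complex.dist_eq, sub_zero, hωdef]
    exact key_geom (hu z hz) (hv z hz) hl hm hlm
  · -- the functional equation
    intro z hz
    have hz0 : (0:ℂ) ∈ ball (0:ℂ) 1 := by simp
    have hu0 := (ball_facts (hu z hz)).1
    have hv0 := (ball_facts (hv z hz)).1
    have huarg := (ball_facts (hu z hz)).2.2.2
    have hvarg := (ball_facts (hv z hz)).2.2.2
    set L : ℂ := (l : ℂ) * Complex.log (1 - ω₁ z) + (m : ℂ) * Complex.log (1 - ω₂ z) with hL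
    have hLim : L.im = l * Complex.arg (1 - ω₁ z) + m * Complex.arg (1 - ω₂ z) := by
      simp [hL, Complex.log_im]
    have hpi : 0 < Real.pi := Real.pi_pos
    have hIm1 : -Real.pi < L.im := by
      rw [hLim]; rw [abs_lt] at huarg hvarg
      nlinarith [huarg.1, hvarg.1]
    have hIm2 : L.im ≤ Real.pi := by
      rw [hLim]; rw [abs_lt] at huarg hvarg
      nlinarith [huarg.2, hvarg.2]
    have h1ω : 1 - ω z = Complex.exp L := by simp [hωdef, hL]
    have hlogexp : Complex.log (Complex.exp L) = L := Complex.log_exp hIm1 hIm2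
    have hcoef : ((α + β : ℝ) : ℂ) * L = (α : ℂ) * Complex.log (1 - ω₁ z)
        + (β : ℂ) * Complex.log (1 - ω₂ z) := by
      have hsne : ((α : ℂ) + (β : ℂ)) ≠ 0 := by
        have := Complex.ofReal_ne_zero.2 (ne_of_gt hs)
        push_cast at this
        exact this
      have e1 : ((α + β : ℝ) : ℂ) * ((l : ℝ) : ℂ) = (α : ℂ) := by
        rw [hldef]; push_cast; field_simp
      have e2 : ((α + β : ℝ) : ℂ) * ((m : ℝ) : ℂ) = (β : ℂ) := by
        rw [hmdef]; push_cast; field_simp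
      rw [hL, mul_add, ← mul_assoc, ← mul_assoc, e1, e2]
    have hFz : F z = (1 - ω₁ z) ^ (α : ℂ) := hω₁e z hz
    have hGz : G z = (1 - ω₂ z) ^ (β : ℂ) := hω₂e z hz
    show F z * G z = (1 - ω z) ^ ((α + β : ℝ) : ℂ)
    rw [hFz, hGz, h1ω, Complex.cpow_def_of_ne_zero (Complex.exp_ne_zero L),
      Complex.cpow_def_of_ne_zero hu0, Complex.cpow_def_of_ne_zero hv0, hlogexp,
      mul_comm L, hcoef, Complex.exp_add, mul_comm (Complex.log (1 - ω₁ z)),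
      mul_comm (Complex.log (1 - ω₂ z))]
end

section
/- Let c_0, …, c_{2n+1} be real numbers with c_{2k} = c_{2k+1} for all k. Then for every φ ∈ (0, π), sin(φ/2) · Σ_{k=0}^{2n+1} c_k cos(kφ) = cos(φ/2) · Σ_{k=1}^{2n+1} c_k sin(k(π-φ)). In particular, the positivity of Σ_{k=0}^{2n+1} c_k cos(kφ) for all φ ∈ (0,π) is equivalent to the positivity of Σ_{k=1}^{2n+1} c_k sin(kφ) for all φ ∈ (0,π). -/
open Real

private lemma pairk (m : ℕ) (φ : ℝ) :
    Real.sin (φ/2) * (Real.cos ((2*m : ℕ) * φ) + Real.cos (((2*m+1 : ℕ) : ℝ) * φ))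
      = Real.cos (φ/2) * (Real.sin ((2*m : ℕ) * (π - φ)) + Real.sin (((2*m+1 : ℕ) : ℝ) * (π - φ))) := by
  push_cast
  have h2 : Real.cos (2*(m:ℝ)*π) = 1 := by
    rw [show 2*(m:ℝ)*π = (m:ℝ)*(2*π) by ring]
    exact Real.cos_nat_mul_two_pi m
  have h3 : Real.sin (2*(m:ℝ)*π) = 0 := by
    rw [show 2*(m:ℝ)*π = ((2*m : ℕ):ℝ)*π by push_cast; ring]
    exact Real.sin_nat_mul_pi _
  rw [show (2*(m:ℝ))*(π-φ) = 2*(m:ℝ)*π - 2*m*φ by ring,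
      show (2*(m:ℝ)+1)*(π-φ) = (2*(m:ℝ)*π + π) - (2*(m:ℝ)+1)*φ by ring,
      Real.sin_sub, Real.sin_sub,
      show (2*(m:ℝ)+1)*φ = 2*(m:ℝ)*φ + (φ/2 + φ/2) by ring]
  simp only [Real.sin_sub, Real.sin_add, Real.cos_add, Real.cos_sub, h2, h3,
    Real.sin_pi, Real.cos_pi]
  linear_combination (-(Real.sin (φ/2) * Real.cos (2*(m:ℝ)*φ) + Real.cos (φ/2) * Real.sin (2*(m:ℝ)*φ))) * Real.sin_sq_add_cos_sq (φ/2)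

private lemma keylem (c : ℕ → ℝ) (hc : ∀ k, c (2 * k) = c (2 * k + 1)) (n : ℕ) (φ : ℝ) :
    Real.sin (φ / 2) * ∑ k ∈ Finset.range (2 * n + 2), c k * Real.cos (k * φ)
      = Real.cos (φ / 2) * ∑ k ∈ Finset.range (2 * n + 2), c k * Real.sin (k * (π - φ)) := by
  induction n with
  | zero =>
    have p0 := pairk 0 φ
    have h0 := hc 0
    norm_num at p0 h0 ⊢
    simp only [Finset.sum_range_succ, Finset.sum_range_zero]
    norm_num
    linear_combination c 1 * p0 + Real.sin (φ/2) * h0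
  | succ m ih =>
    rw [show 2*(m+1)+2 = (2*m+2)+1+1 by ring, Finset.sum_range_succ, Finset.sum_range_succ,
        Finset.sum_range_succ (fun k => c k * Real.sin (k * (π - φ))),
        Finset.sum_range_succ (fun k => c k * Real.sin (k * (π - φ)))]
    have p := pairk (m+1) φ
    have hc' := hc (m+1)
    rw [show 2*(m+1) = 2*m+2 by ring] at p hc'
    linear_combination ih + c (2*m+2) * p
      - (Real.sin (φ/2) * Real.cos (((2*m+2+1 : ℕ) : ℝ)*φ)
         - Real.cos (φ/2) * Real.sin (((2*m+2+1 : ℕ) : ℝ)*(π-φ))) * hc'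

/-- For reals `c_0, …, c_{2n+1}` with `c_{2k} = c_{2k+1}`: for every `φ ∈ (0,π)`,
`sin(φ/2) Σ_{k=0}^{2n+1} c_k cos(kφ) = cos(φ/2) Σ_{k=1}^{2n+1} c_k sin(k(π-φ))`,
and positivity of the cosine sums on `(0,π)` is equivalent to positivity of the
sine sums on `(0,π)`. -/
theorem stmt13 (n : ℕ) (c : ℕ → ℝ) (hc : ∀ k, c (2 * k) = c (2 * k + 1)) :
    (∀ φ ∈ Set.Ioo 0 π,
      Real.sin (φ / 2) * ∑ k ∈ Finset.range (2 * n + 2), c k * Real.cos (k * φ)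
        = Real.cos (φ / 2) *
            ∑ k ∈ Finset.Icc 1 (2 * n + 1), c k * Real.sin (k * (π - φ))) ∧
    ((∀ φ ∈ Set.Ioo 0 π,
        0 < ∑ k ∈ Finset.range (2 * n + 2), c k * Real.cos (k * φ)) ↔
      (∀ φ ∈ Set.Ioo 0 π,
        0 < ∑ k ∈ Finset.Icc 1 (2 * n + 1), c k * Real.sin (k * φ))) := by
  have hIcc : ∀ φ : ℝ, ∑ k ∈ Finset.Icc 1 (2 * n + 1), c k * Real.sin (k * (π - φ))
      = ∑ k ∈ Finset.range (2 * n + 2), c k * Real.sin (k * (π - φ)) := by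
    intro φ
    rw [Finset.range_eq_Ico, Finset.sum_eq_sum_Ico_succ_bot (by omega)
      (fun k => c k * Real.sin (k * (π - φ))), ← Finset.Ico_add_one_right_eq_Icc]
    simp
    rfl
  have key : ∀ φ : ℝ,
      Real.sin (φ / 2) * ∑ k ∈ Finset.range (2 * n + 2), c k * Real.cos (k * φ)
        = Real.cos (φ / 2) * ∑ k ∈ Finset.Icc 1 (2 * n + 1), c k * Real.sin (k * (π - φ)) := by
    intro φ; rw [hIcc φ]; exact keylem c hc n φ
  refine ⟨fun φ _ => key φ, ?_⟩
  have trig : ∀ φ ∈ Set.Ioo (0:ℝ) π, 0 < Real.sin (φ/2) ∧ 0 < Real.cos (φ/2) := by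
    intro φ hφ
    have h1 : 0 < φ/2 := by linarith [hφ.1]
    have h2 : φ/2 < π/2 := by linarith [hφ.2]
    exact ⟨Real.sin_pos_of_pos_of_lt_pi h1 (by linarith [Real.pi_pos]),
      Real.cos_pos_of_mem_Ioo ⟨by linarith [Real.pi_pos], h2⟩⟩
  constructor
  · intro hcos φ hφ
    set ψ := π - φ with hψ
    have hψm : ψ ∈ Set.Ioo (0:ℝ) π := ⟨by simp [hψ]; linarith [hφ.2], by simp [hψ]; linarith [hφ.1]⟩
    have hk := key ψ
    rw [show π - ψ = φ by simp [hψ]] at hk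
    obtain ⟨hs, hcψ⟩ := trig ψ hψm
    have hpos := hcos ψ hψm
    nlinarith [mul_pos hs hpos]
  · intro hsin φ hφ
    have hk := key φ
    have hψm : π - φ ∈ Set.Ioo (0:ℝ) π := ⟨by linarith [hφ.2], by linarith [hφ.1]⟩
    have hpos := hsin (π - φ) hψm
    obtain ⟨hs, hcψ⟩ := trig φ hφ
    nlinarith [mul_pos hcψ hpos]
end

section
/- Let c_0,…,c_{2n+1} be reals satisfying c_{2k}=c_{2k+1}=d_k for k=0,…,n. If Σ_{k=0}^{2n+1} c_k cos(kφ) > 0 and Σ_{k=1}^{2n+1} c_k sin(kφ) > 0 for all φ ∈ (0, π), then Re[(1 - e^{2iφ})(Σ_{k=0}^n d_k e^{2ikφ})²] > 0 for all φ ∈ (0, π). -/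
open Real Complex

lemma pair_sum (n : ℕ) (f : ℕ → ℂ) (z : ℂ) :
    ∑ k ∈ Finset.range (2 * n + 2), f (k / 2) * z ^ k
      = (1 + z) * ∑ k ∈ Finset.range (n + 1), f k * z ^ (2 * k) := by
  induction n with
  | zero => simp [Finset.sum_range_succ]; ring
  | succ m ih =>
    have h1 : 2 * (m + 1) + 2 = (2 * m + 2) + 1 + 1 := by ring
    have h2 : (2 * m + 2) / 2 = m + 1 := by omega
    have h3 : (2 * m + 2 + 1) / 2 = m + 1 := by omega
    rw [h1, Finset.sum_range_succ, Finset.sum_range_succ, ih,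
      Finset.sum_range_succ _ (m + 1), Finset.sum_range_succ _ m, h2, h3]
    ring

lemma term_re (dd x : ℝ) :
    ((dd : ℂ) * Complex.exp ((x : ℂ) * Complex.I)).re = dd * Real.cos x := by
  simp [Complex.mul_re, Complex.exp_ofReal_mul_I_re, Complex.exp_ofReal_mul_I_im]

lemma term_im (dd x : ℝ) :
    ((dd : ℂ) * Complex.exp ((x : ℂ) * Complex.I)).im = dd * Real.sin x := by
  simp [Complex.mul_im, Complex.exp_ofReal_mul_I_re, Complex.exp_ofReal_mul_I_im]

/-- With reals `d_0,…,d_n` and `c_{2k} = c_{2k+1} = d_k` (i.e. `c_k = d_{⌊k/2⌋}`),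
if `Σ_{k=0}^{2n+1} c_k cos(kφ) > 0` and `Σ_{k=1}^{2n+1} c_k sin(kφ) > 0` for all
`φ ∈ (0,π)`, then `Re[(1 - e^{2iφ})(Σ_{k=0}^n d_k e^{2ikφ})²] > 0` on `(0,π)`. -/
theorem stmt14 (n : ℕ) (d : ℕ → ℝ)
    (hcos : ∀ φ ∈ Set.Ioo 0 π,
      0 < ∑ k ∈ Finset.range (2 * n + 2), d (k / 2) * Real.cos (k * φ))
    (hsin : ∀ φ ∈ Set.Ioo 0 π,
      0 < ∑ k ∈ Finset.Icc 1 (2 * n + 1), d (k / 2) * Real.sin (k * φ)) :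
    ∀ φ ∈ Set.Ioo 0 π,
      0 < ((1 - Complex.exp (2 * Complex.I * φ)) *
        (∑ k ∈ Finset.range (n + 1),
          (d k : ℂ) * Complex.exp (2 * Complex.I * k * φ)) ^ 2).re := by
  -- sin sums over range = over Icc
  have hsin' : ∀ ψ : ℝ, ∑ k ∈ Finset.range (2 * n + 2), d (k / 2) * Real.sin (k * ψ)
      = ∑ k ∈ Finset.Icc 1 (2 * n + 1), d (k / 2) * Real.sin (k * ψ) := by
    intro ψ
    have h : Finset.range (2 * n + 2) = insert 0 (Finset.Icc 1 (2 * n + 1)) := by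
      ext k; simp [Finset.mem_range, Finset.mem_Icc]; omega
    rw [h, Finset.sum_insert (by simp)]
    simp
  intro φ hφ
  obtain ⟨hφ0, hφπ⟩ := hφ
  have hφ' : π - φ ∈ Set.Ioo 0 π := ⟨by linarith, by linarith⟩
  set z : ℂ := Complex.exp ((φ : ℂ) * Complex.I) with hz
  have hzk : ∀ k : ℕ, z ^ k = Complex.exp ((↑(k * φ) : ℂ) * Complex.I) := by
    intro k
    rw [hz, ← Complex.exp_nat_mul]
    push_cast
    ring_nf
  have hnegz : -z = Complex.exp ((↑(φ + π) : ℂ) * Complex.I) := by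
    have : Complex.exp ((↑(π:ℝ) : ℂ) * Complex.I) = -1 := by
      push_cast; simpa using Complex.exp_pi_mul_I
    push_cast
    rw [add_mul, Complex.exp_add]
    push_cast at this
    rw [this]
    ring
  have hnegzk : ∀ k : ℕ, (-z) ^ k = Complex.exp ((↑(k * (φ + π)) : ℂ) * Complex.I) := by
    intro k
    rw [hnegz, ← Complex.exp_nat_mul]
    push_cast
    ring_nf
  -- rewrite goal in terms of z
  have hS : ∑ k ∈ Finset.range (n + 1), (d k : ℂ) * Complex.exp (2 * Complex.I * k * φ)
      = ∑ k ∈ Finset.range (n + 1), (d k : ℂ) * z ^ (2 * k) := by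
    refine Finset.sum_congr rfl fun k _ => ?_
    rw [hzk (2 * k)]
    congr 1
    push_cast
    ring
  have hz2 : Complex.exp (2 * Complex.I * φ) = z ^ 2 := by
    rw [hzk 2]
    congr 1
    push_cast
    ring
  rw [hS, hz2]
  set S : ℂ := ∑ k ∈ Finset.range (n + 1), (d k : ℂ) * z ^ (2 * k) with hSdef
  -- A and B
  set A : ℂ := ∑ k ∈ Finset.range (2 * n + 2), (d (k / 2) : ℂ) * z ^ k with hA
  set B : ℂ := ∑ k ∈ Finset.range (2 * n + 2), (d (k / 2) : ℂ) * (-z) ^ k with hB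
  have hAeq : A = (1 + z) * S := pair_sum n (fun k => (d k : ℂ)) z
  have hBeq : B = (1 - z) * S := by
    rw [hB, pair_sum n (fun k => (d k : ℂ)) (-z)]
    have : ∀ k : ℕ, (-z) ^ (2 * k) = z ^ (2 * k) := by
      intro k; rw [pow_mul, pow_mul, neg_sq]
    simp only [this]
    rw [← hSdef]
    ring
  have key : (1 - z ^ 2) * S ^ 2 = A * B := by
    rw [hAeq, hBeq]; ring
  rw [key, Complex.mul_re]
  -- compute re/im of A and B
  have hAre : A.re = ∑ k ∈ Finset.range (2 * n + 2), d (k / 2) * Real.cos (k * φ) := by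
    rw [hA, Complex.re_sum]
    refine Finset.sum_congr rfl fun k _ => ?_
    rw [hzk k, term_re]
  have hAim : A.im = ∑ k ∈ Finset.range (2 * n + 2), d (k / 2) * Real.sin (k * φ) := by
    rw [hA, Complex.im_sum]
    refine Finset.sum_congr rfl fun k _ => ?_
    rw [hzk k, term_im]
  have hBre : B.re = ∑ k ∈ Finset.range (2 * n + 2), d (k / 2) * Real.cos (k * (π - φ)) := by
    rw [hB, Complex.re_sum]
    refine Finset.sum_congr rfl fun k _ => ?_
    rw [hnegzk k, term_re]
    congr 1
    have h1 : (k : ℝ) * (φ + π) = k * π - -(k * φ) := by ring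
    have h2 : (k : ℝ) * (π - φ) = k * π - k * φ := by ring
    rw [h1, h2, Real.cos_nat_mul_pi_sub, Real.cos_nat_mul_pi_sub, Real.cos_neg]
  have hBim : B.im = -∑ k ∈ Finset.range (2 * n + 2), d (k / 2) * Real.sin (k * (π - φ)) := by
    rw [hB, Complex.im_sum, ← Finset.sum_neg_distrib]
    refine Finset.sum_congr rfl fun k _ => ?_
    rw [hnegzk k, term_im]
    have h1 : (k : ℝ) * (φ + π) = k * π - -(k * φ) := by ring
    have h2 : (k : ℝ) * (π - φ) = k * π - k * φ := by ring
    rw [h1, h2, Real.sin_nat_mul_pi_sub, Real.sin_nat_mul_pi_sub, Real.sin_neg]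
    ring
  rw [hAre, hAim, hBre, hBim]
  have c1 := hcos φ ⟨hφ0, hφπ⟩
  have c2 := hcos (π - φ) hφ'
  have s1 := hsin φ ⟨hφ0, hφπ⟩
  have s2 := hsin (π - φ) hφ'
  rw [← hsin' φ] at s1
  rw [← hsin' (π - φ)] at s2
  nlinarith [mul_pos c1 c2, mul_pos s1 s2]
end
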